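/- For n ≥ 3, the inverse of the circulant matrix Q = circ(Q₁, ..., Qₙ) over ℚ is the circulant matrix circ(q₁, ..., qₙ) where q₁ = (1/uₙ)(1 - 8(Qₙ-2)^{n-3}/(Q₁-Qₙ₊₁)^{n-2} + Σ_{k=1}^{n-3} (Q_{n-k+2} - 3Q_{n-k+1})(Qₙ-2)^{k-1}/(Q₁-Qₙ₊₁)^k), q₂ = (1/uₙ)(-3 + Σ_{k=1}^{n-2} (Q_{n-k+1} - 3Q_{n-k})(Qₙ-2)^{k-1}/(Q₁-Qₙ₊₁)^k), and q_m = 4(Qₙ-2)^{m-3}/(uₙ (Q₁-Qₙ₊₁)^{m-2}) for 3 ≤ m ≤ n, where uₙ = Q₁ - 3Qₙ + Σ_{k=2}^{n-1} (Q_{k+1} - 3Qₖ)((Qₙ-2)/(Q₁-Qₙ₊₁))^{n-k}. -/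

import Mathlib

def pell : ℕ → ℚ
  | 0 => 0
  | 1 => 1
  | n + 2 => 2 * pell (n + 1) + pell n

def pellLucas : ℕ → ℚ
  | 0 => 2
  | 1 => 2
  | n + 2 => 2 * pellLucas (n + 1) + pellLucas n

/-- Circulant matrix `circ (c₁, …, cₙ)` with `(i,j)` entry `c ((j - i mod n) + 1)`. -/
def circMat (n : ℕ) (c : ℕ → ℚ) : Matrix (Fin n) (Fin n) ℚ :=
  fun i j => c ((j - i : Fin n).val + 1)

/-!
Let `J` be the cyclic shift, `s = Q₁ - Qₙ₊₁`, `r = Qₙ - 2` and `t = r / s`, so that `-1 < t ≤ 0`.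
The recurrence `Qₖ₊₂ = 2Qₖ₊₁ + Qₖ` kills every entry of `Q (J² + 2J - 1)` except two wrap-around
ones, giving `Q (J² + 2J - 1) = r J - s = -s (1 - tJ)`. The circulant `G = circ(1, t, …, tⁿ⁻¹)`
satisfies `(1 - tJ) G = 1 - tⁿ`, hence `Q⁻¹ = (J² + 2J - 1) G / (s (tⁿ - 1))`, whose entries are
`(t^[d-2] + 2 t^[d-1] - t^d) / (s (tⁿ - 1))` with exponents mod `n`.

The sums in `uₙ`, `q₁`, `q₂` are reversed generating sums `∑ aₖ₋ᵢ tⁱ` of `aₖ = Qₖ₊₁ - 3Qₖ`, which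
again satisfies the Pell recurrence; multiplying by `1 + 2t - t²` telescopes them. This yields
`uₙ (1 + 2t - t²) = 4 (tⁿ - 1)`, and then the paper's `q₁, q₂, qₘ` are the entries above.
-/

open Finset

theorem one_add_two_mul_sub_sq_mul_sum_rev {R : Type*} [CommRing R] {a : ℕ → R}
    (ha : ∀ k, a (k + 2) = 2 * a (k + 1) + a k) (c L : ℕ) (x : R) :
    (1 + 2 * x - x ^ 2) * ∑ i ∈ range L, a (L + c - i) * x ^ i =
      a (L + c) + a (L + c + 1) * x - (a c + a (c + 1) * x) * x ^ L := by
  induction L with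
  | zero => simp
  | succ L ih =>
    have hshift : ∑ i ∈ range L, a (L + 1 + c - (i + 1)) * x ^ (i + 1) =
        x * ∑ i ∈ range L, a (L + c - i) * x ^ i := by
      rw [mul_sum]
      exact sum_congr rfl fun i _ => by rw [add_right_comm, Nat.add_sub_add_right]; ring
    rw [sum_range_succ', hshift, Nat.sub_zero, add_right_comm]
    linear_combination x * ih - x * ha (L + c)

theorem sum_Icc_one_mul_pow_div_pow {K : Type*} [Field K] (f : ℕ → K) (r s : K) (L : ℕ) :
    ∑ k ∈ Icc 1 L, f k * r ^ (k - 1) / s ^ k = (∑ i ∈ range L, f (i + 1) * (r / s) ^ i) / s := by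
  rw [← Ico_add_one_right_eq_Icc, sum_Ico_eq_sum_range, Nat.add_sub_cancel, sum_div]
  refine sum_congr rfl fun i _ => ?_
  rw [add_comm 1 i, Nat.add_sub_cancel, div_pow, pow_succ]
  ring

theorem Fin.sub_one_sub_one_cases {m : ℕ} (d : Fin (m + 2)) :
    (d = 0 ∧ (d - 1).val = m + 1 ∧ (d - 1 - 1).val = m) ∨
    (d = 1 ∧ (d - 1).val = 0 ∧ (d - 1 - 1).val = m + 1) ∨
    ∃ e, d.val = e + 2 ∧ (d - 1).val = e + 1 ∧ (d - 1 - 1).val = e := by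
  rw [Fin.coe_sub_one (d - 1), Fin.coe_sub_one d]
  rcases d with ⟨_ | _ | e, hd⟩
  · simp
  · simp
  · exact Or.inr (Or.inr ⟨e, rfl, by simp [Fin.ext_iff, Fin.coe_sub_one]⟩)

section CyclicShift

variable {R : Type*} [Semiring R] {n : ℕ} [NeZero n]

def cyclicShift (R : Type*) [Semiring R] (n : ℕ) [NeZero n] : Matrix (Fin n) (Fin n) R :=
  Matrix.of fun i j => if j = i + 1 then 1 else 0

theorem cyclicShift_apply (i j : Fin n) : cyclicShift R n i j = if j - i = 1 then 1 else 0 := by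
  simp [cyclicShift, sub_eq_iff_eq_add']

theorem cyclicShift_mul_apply (M : Matrix (Fin n) (Fin n) R) (i j : Fin n) :
    (cyclicShift R n * M) i j = M (i + 1) j := by
  simp [cyclicShift, Matrix.mul_apply]

theorem mul_cyclicShift_apply (M : Matrix (Fin n) (Fin n) R) (i j : Fin n) :
    (M * cyclicShift R n) i j = M i (j - 1) := by
  simp [cyclicShift, Matrix.mul_apply, ← sub_eq_iff_eq_add]

theorem Matrix.one_apply_eq_ite_sub (i j : Fin n) :
    (1 : Matrix (Fin n) (Fin n) R) i j = if j - i = 0 then 1 else 0 := by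
  simp [Matrix.one_apply, sub_eq_zero, eq_comm]

end CyclicShift

local notation "S" => cyclicShift ℚ

theorem circMat_apply (n : ℕ) (c : ℕ → ℚ) (i j : Fin n) :
    circMat n c i j = c ((j - i).val + 1) := rfl

theorem one_sub_smul_cyclicShift_mul_circMat_pow (m : ℕ) (t : ℚ) :
    (1 - t • S (m + 1)) * circMat (m + 1) (fun k => t ^ (k - 1)) = (1 - t ^ (m + 1)) • 1 := by
  ext i j
  simp only [sub_mul, one_mul, Matrix.smul_mul, Matrix.sub_apply, Matrix.smul_apply,
    cyclicShift_mul_apply, circMat_apply, Matrix.one_apply_eq_ite_sub, Nat.add_sub_cancel,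
    show j - (i + 1) = j - i - 1 by abel, smul_eq_mul]
  generalize j - i = d
  rw [Fin.coe_sub_one]
  split_ifs with hd
  · simp [hd, pow_succ']
  · obtain ⟨e, he⟩ := Nat.exists_eq_add_one.mpr (Fin.pos_iff_ne_zero.mpr hd)
    rw [he, Nat.add_sub_cancel, pow_succ']
    ring

theorem circMat_eq_smul_mul {n : ℕ} [NeZero n] (t D : ℚ) (w : ℕ → ℚ)
    (hw : ∀ d : Fin n,
      w (d.val + 1) = (t ^ (d - 1 - 1).val + 2 * t ^ (d - 1).val - t ^ d.val) / D) :
    circMat n w = D⁻¹ • ((S n * S n + 2 • S n - 1) * circMat n (fun k => t ^ (k - 1))) := by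
  ext i j
  simp only [add_mul, sub_mul, one_mul, mul_assoc, Matrix.smul_mul, Matrix.sub_apply,
    Matrix.add_apply, Matrix.smul_apply, cyclicShift_mul_apply, circMat_apply, Nat.add_sub_cancel,
    hw, show j - (i + 1 + 1) = j - i - 1 - 1 by abel, show j - (i + 1) = j - i - 1 by abel,
    smul_eq_mul]
  ring

theorem pellLucas_add_two (k : ℕ) :
    pellLucas (k + 2) = 2 * pellLucas (k + 1) + pellLucas k := rfl

theorem pellLucas_one : pellLucas 1 = 2 := rfl

theorem pellLucas_two : pellLucas 2 = 6 := by norm_num [pellLucas]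

theorem two_le_pellLucas : ∀ k, 2 ≤ pellLucas k
  | 0 => le_rfl
  | 1 => le_rfl
  | k + 2 => by
    have := two_le_pellLucas k
    have := two_le_pellLucas (k + 1)
    rw [pellLucas_add_two]
    linarith

theorem pellLucas_lt_succ (k : ℕ) : pellLucas (k + 1) < pellLucas (k + 2) := by
  have := two_le_pellLucas k
  have := two_le_pellLucas (k + 1)
  rw [pellLucas_add_two]
  linarith

theorem pellLucas_one_sub_succ_neg {n : ℕ} (hn : 1 ≤ n) : pellLucas 1 - pellLucas (n + 1) < 0 := by
  obtain ⟨k, rfl⟩ : ∃ k, n = k + 1 := ⟨n - 1, by omega⟩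
  have := two_le_pellLucas k
  have := two_le_pellLucas (k + 1)
  rw [pellLucas_add_two, pellLucas_one]
  linarith

theorem circMat_pellLucas_mul (m : ℕ) :
    circMat (m + 2) pellLucas * (S (m + 2) * S (m + 2) + 2 • S (m + 2) - 1) =
      (pellLucas (m + 2) - 2) • S (m + 2) - (pellLucas 1 - pellLucas (m + 2 + 1)) • 1 := by
  ext i j
  simp only [mul_sub, mul_add, mul_one, ← mul_assoc, Matrix.mul_smul, Matrix.sub_apply,
    Matrix.add_apply, Matrix.smul_apply, mul_cyclicShift_apply, circMat_apply,
    cyclicShift_apply, Matrix.one_apply_eq_ite_sub, show j - 1 - 1 - i = j - i - 1 - 1 by abel,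
    show j - 1 - i = j - i - 1 by abel]
  simp only [nsmul_eq_mul, Nat.cast_ofNat, smul_eq_mul, mul_ite, mul_one, mul_zero]
  generalize j - i = d
  rcases Fin.sub_one_sub_one_cases d with ⟨rfl, h1, h2⟩ | ⟨rfl, h1, h2⟩ | ⟨e, h0, h1, h2⟩
  · rw [h1, h2, Fin.val_zero, if_neg zero_ne_one, if_pos rfl]
    linear_combination -pellLucas_add_two (m + 1)
  · rw [h1, h2, Fin.val_one, if_pos rfl, if_neg one_ne_zero, pellLucas_one, pellLucas_two]
    ring
  · have hd0 : d ≠ 0 := by rw [Ne, Fin.ext_iff, h0, Fin.val_zero]; omega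
    have hd1 : d ≠ 1 := by rw [Ne, Fin.ext_iff, h0, Fin.val_one]; omega
    rw [h0, h1, h2, if_neg hd0, if_neg hd1]
    linear_combination -pellLucas_add_two (e + 1)

def pellLucasRatio (n : ℕ) : ℚ := (pellLucas n - 2) / (pellLucas 1 - pellLucas (n + 1))

theorem pellLucas_one_sub_succ_mul_pellLucasRatio {n : ℕ} (hn : 1 ≤ n) :
    (pellLucas 1 - pellLucas (n + 1)) * pellLucasRatio n = pellLucas n - 2 :=
  mul_div_cancel₀ _ (pellLucas_one_sub_succ_neg hn).ne

theorem abs_pellLucasRatio_lt_one {n : ℕ} (hn : 1 ≤ n) : |pellLucasRatio n| < 1 := by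
  obtain ⟨k, rfl⟩ : ∃ k, n = k + 1 := ⟨n - 1, by omega⟩
  have hs := pellLucas_one_sub_succ_neg hn
  rw [pellLucasRatio, abs_div, div_lt_one (abs_pos.mpr hs.ne), abs_of_neg hs,
    abs_of_nonneg (sub_nonneg.mpr (two_le_pellLucas _))]
  linarith [pellLucas_lt_succ k, pellLucas_one]

theorem pellLucasRatio_pow_sub_one_ne_zero {n : ℕ} (hn : 1 ≤ n) : pellLucasRatio n ^ n - 1 ≠ 0 := by
  intro h
  have := pow_lt_one₀ (abs_nonneg _) (abs_pellLucasRatio_lt_one hn) (by omega : n ≠ 0)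
  rw [← abs_pow, sub_eq_zero.mp h, abs_one] at this
  exact this.false

theorem circMat_pellLucas_mul_eq_one_of_forall_fin (m : ℕ) (w : ℕ → ℚ)
    (hw : ∀ d : Fin (m + 2), w (d.val + 1) =
      (pellLucasRatio (m + 2) ^ (d - 1 - 1).val + 2 * pellLucasRatio (m + 2) ^ (d - 1).val -
        pellLucasRatio (m + 2) ^ d.val) /
      ((pellLucas 1 - pellLucas (m + 2 + 1)) * (pellLucasRatio (m + 2) ^ (m + 2) - 1))) :
    circMat (m + 2) pellLucas * circMat (m + 2) w = 1 := by
  set t := pellLucasRatio (m + 2)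
  set s := pellLucas 1 - pellLucas (m + 2 + 1)
  have hs : s ≠ 0 := (pellLucas_one_sub_succ_neg (by omega)).ne
  have hT : t ^ (m + 2) - 1 ≠ 0 := pellLucasRatio_pow_sub_one_ne_zero (by omega)
  have hfactor : (pellLucas (m + 2) - 2) • S (m + 2) - s • 1 = -s • (1 - t • S (m + 2)) := by
    rw [← pellLucas_one_sub_succ_mul_pellLucasRatio (by omega)]
    module
  rw [circMat_eq_smul_mul t _ w hw, Matrix.mul_smul, ← mul_assoc, circMat_pellLucas_mul, hfactor,
    Matrix.smul_mul, one_sub_smul_cyclicShift_mul_circMat_pow (m + 1), smul_smul, smul_smul]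
  convert one_smul ℚ (1 : Matrix (Fin (m + 2)) (Fin (m + 2)) ℚ)
  field_simp
  ring

theorem circMat_pellLucas_mul_eq_one {n : ℕ} (hn : 2 ≤ n) (w : ℕ → ℚ)
    (hw₁ : w 1 = (pellLucasRatio n ^ (n - 2) + 2 * pellLucasRatio n ^ (n - 1) - 1) /
      ((pellLucas 1 - pellLucas (n + 1)) * (pellLucasRatio n ^ n - 1)))
    (hw₂ : w 2 = (pellLucasRatio n ^ (n - 1) + 2 - pellLucasRatio n) /
      ((pellLucas 1 - pellLucas (n + 1)) * (pellLucasRatio n ^ n - 1)))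
    (hw : ∀ e, e + 3 ≤ n → w (e + 3) =
      (pellLucasRatio n ^ e + 2 * pellLucasRatio n ^ (e + 1) - pellLucasRatio n ^ (e + 2)) /
        ((pellLucas 1 - pellLucas (n + 1)) * (pellLucasRatio n ^ n - 1))) :
    circMat n pellLucas * circMat n w = 1 := by
  obtain ⟨m, rfl⟩ : ∃ m, n = m + 2 := ⟨n - 2, by omega⟩
  refine circMat_pellLucas_mul_eq_one_of_forall_fin m w fun d => ?_
  rcases Fin.sub_one_sub_one_cases d with ⟨rfl, h1, h2⟩ | ⟨rfl, h1, h2⟩ | ⟨e, h0, h1, h2⟩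
  · rw [h1, h2, Fin.val_zero, pow_zero]
    exact hw₁
  · rw [h1, h2, Fin.val_one, pow_zero, pow_one, mul_one]
    exact hw₂
  · rw [h0, h1, h2]
    exact hw e (by omega)

def pellLucasDiff (k : ℕ) : ℚ := pellLucas (k + 1) - 3 * pellLucas k

theorem pellLucasDiff_add_two (k : ℕ) :
    pellLucasDiff (k + 2) = 2 * pellLucasDiff (k + 1) + pellLucasDiff k := by
  simp only [pellLucasDiff, pellLucas_add_two k, pellLucas_add_two (k + 1)]
  ring

theorem pellLucasDiff_one : pellLucasDiff 1 = 0 := by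
  norm_num [pellLucasDiff, pellLucas_one, pellLucas_two]

theorem pellLucasDiff_two : pellLucasDiff 2 = -4 := by
  norm_num [pellLucasDiff, pellLucas]

def pellLucasU (n : ℕ) : ℚ :=
  pellLucas 1 - 3 * pellLucas n + ∑ k ∈ Icc 2 (n - 1), pellLucasDiff k * pellLucasRatio n ^ (n - k)

theorem pellLucasU_mul {n : ℕ} (hn : 2 ≤ n) :
    pellLucasU n * (1 + 2 * pellLucasRatio n - pellLucasRatio n ^ 2) =
      4 * (pellLucasRatio n ^ n - 1) := by
  have hst := pellLucas_one_sub_succ_mul_pellLucasRatio (by omega : 1 ≤ n)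
  obtain ⟨m, rfl⟩ : ∃ m, n = m + 2 := ⟨n - 2, by omega⟩
  set t := pellLucasRatio (m + 2)
  have hsum : ∑ k ∈ Icc 2 (m + 2 - 1), pellLucasDiff k * t ^ (m + 2 - k) =
      t * ∑ i ∈ range m, pellLucasDiff (m + 1 - i) * t ^ i := by
    rw [mul_sum]
    refine sum_nbij' (fun k => m + 1 - k) (fun i => m + 1 - i) ?_ ?_ ?_ ?_ ?_ <;>
      intro k hk <;> simp only [mem_Icc, mem_range] at hk ⊢
    any_goals omega
    rw [Nat.sub_sub_self (by omega), show m + 2 - k = m + 1 - k + 1 by omega, pow_succ]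
    ring
  have htel := one_add_two_mul_sub_sq_mul_sum_rev pellLucasDiff_add_two 1 m t
  rw [pellLucasDiff_one, pellLucasDiff_two] at htel
  rw [pellLucasU, hsum]
  simp only [pellLucasDiff, pellLucas_one] at htel hst ⊢
  linear_combination t * htel + (3 - t) * hst + 3 * t * pellLucas_add_two (m + 1)

theorem pellLucasInv_one_eq {n : ℕ} (hn : 3 ≤ n) {u : ℚ}
    (hu : u * (1 + 2 * pellLucasRatio n - pellLucasRatio n ^ 2) = 4 * (pellLucasRatio n ^ n - 1)) :
    1 / u * (1 - 8 * (pellLucas n - 2) ^ (n - 3) / (pellLucas 1 - pellLucas (n + 1)) ^ (n - 2) +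
      ∑ k ∈ Icc 1 (n - 3), pellLucasDiff (n - k + 1) * (pellLucas n - 2) ^ (k - 1) /
        (pellLucas 1 - pellLucas (n + 1)) ^ k) =
      (pellLucasRatio n ^ (n - 2) + 2 * pellLucasRatio n ^ (n - 1) - 1) /
        ((pellLucas 1 - pellLucas (n + 1)) * (pellLucasRatio n ^ n - 1)) := by
  have hs := (pellLucas_one_sub_succ_neg (by omega : 1 ≤ n)).ne
  have hT := pellLucasRatio_pow_sub_one_ne_zero (by omega : 1 ≤ n)
  have hst := pellLucas_one_sub_succ_mul_pellLucasRatio (by omega : 1 ≤ n)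
  have hu0 : u ≠ 0 := by rintro rfl; exact hT (by linarith)
  obtain ⟨m, rfl⟩ : ∃ m, n = m + 3 := ⟨n - 3, by omega⟩
  set t := pellLucasRatio (m + 3)
  set W := ∑ i ∈ range m, pellLucasDiff (m + 3 - i) * t ^ i
  have hsum : ∑ k ∈ Icc 1 (m + 3 - 3), pellLucasDiff (m + 3 - k + 1) *
      (pellLucas (m + 3) - 2) ^ (k - 1) / (pellLucas 1 - pellLucas (m + 3 + 1)) ^ k =
        W / (pellLucas 1 - pellLucas (m + 3 + 1)) := by
    rw [sum_Icc_one_mul_pow_div_pow, Nat.add_sub_cancel]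
    refine congrArg (· / _) (sum_congr rfl fun i hi => ?_)
    rw [show m + 3 - (i + 1) + 1 = m + 3 - i by simp at hi; omega]
    rfl
  have h8 : 8 * (pellLucas (m + 3) - 2) ^ (m + 3 - 3) /
      (pellLucas 1 - pellLucas (m + 3 + 1)) ^ (m + 3 - 2) =
        8 * t ^ m / (pellLucas 1 - pellLucas (m + 3 + 1)) := by
    rw [← hst, Nat.add_sub_cancel, show m + 3 - 2 = m + 1 from rfl, mul_pow, pow_succ]
    field_simp
  have htel : (1 + 2 * t - t ^ 2) * W = _ :=
    one_add_two_mul_sub_sq_mul_sum_rev pellLucasDiff_add_two 3 m t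
  have hD34 : pellLucasDiff 3 = -8 ∧ pellLucasDiff 4 = -20 := by
    norm_num [pellLucasDiff, pellLucas]
  rw [hD34.1, hD34.2] at htel
  rw [hsum, h8, show m + 3 - 2 = m + 1 from rfl, show m + 3 - 1 = m + 2 from rfl]
  field_simp
  simp only [pellLucasDiff, pellLucas_one] at htel hst ⊢
  linear_combination (-(1 / 4) * ((2 - pellLucas (m + 4)) - 8 * t ^ m + W)) * hu +
    (u / 4) * htel + (u / 4) * (3 - t) * hst + (u / 4) * t * pellLucas_add_two (m + 3)

theorem pellLucasInv_two_eq {n : ℕ} (hn : 2 ≤ n) {u : ℚ}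
    (hu : u * (1 + 2 * pellLucasRatio n - pellLucasRatio n ^ 2) = 4 * (pellLucasRatio n ^ n - 1)) :
    1 / u * (-3 + ∑ k ∈ Icc 1 (n - 2), pellLucasDiff (n - k) * (pellLucas n - 2) ^ (k - 1) /
        (pellLucas 1 - pellLucas (n + 1)) ^ k) =
      (pellLucasRatio n ^ (n - 1) + 2 - pellLucasRatio n) /
        ((pellLucas 1 - pellLucas (n + 1)) * (pellLucasRatio n ^ n - 1)) := by
  have hs := (pellLucas_one_sub_succ_neg (by omega : 1 ≤ n)).ne
  have hT := pellLucasRatio_pow_sub_one_ne_zero (by omega : 1 ≤ n)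
  have hst := pellLucas_one_sub_succ_mul_pellLucasRatio (by omega : 1 ≤ n)
  have hu0 : u ≠ 0 := by rintro rfl; exact hT (by linarith)
  obtain ⟨m, rfl⟩ : ∃ m, n = m + 2 := ⟨n - 2, by omega⟩
  set t := pellLucasRatio (m + 2)
  set V := ∑ i ∈ range m, pellLucasDiff (m + 1 - i) * t ^ i
  have hsum : ∑ k ∈ Icc 1 (m + 2 - 2), pellLucasDiff (m + 2 - k) *
      (pellLucas (m + 2) - 2) ^ (k - 1) / (pellLucas 1 - pellLucas (m + 2 + 1)) ^ k =
        V / (pellLucas 1 - pellLucas (m + 2 + 1)) := by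
    rw [sum_Icc_one_mul_pow_div_pow, Nat.add_sub_cancel]
    refine congrArg (· / _) (sum_congr rfl fun i _ => ?_)
    rw [show m + 2 - (i + 1) = m + 1 - i by omega]
    rfl
  have htel : (1 + 2 * t - t ^ 2) * V = _ :=
    one_add_two_mul_sub_sq_mul_sum_rev pellLucasDiff_add_two 1 m t
  rw [pellLucasDiff_one, pellLucasDiff_two] at htel
  rw [hsum, show m + 2 - 1 = m + 1 from rfl]
  field_simp
  simp only [pellLucasDiff, pellLucas_one] at htel hst ⊢
  linear_combination (-(1 / 4) * (-3 * (2 - pellLucas (m + 3)) + V)) * hu + (u / 4) * htel +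
    (u / 4) * (3 * t - 7) * hst + (3 * u / 4) * pellLucas_add_two (m + 1)

theorem pellLucasInv_eq {n e : ℕ} (he : e + 3 ≤ n) {u : ℚ}
    (hu : u * (1 + 2 * pellLucasRatio n - pellLucasRatio n ^ 2) = 4 * (pellLucasRatio n ^ n - 1)) :
    4 * (pellLucas n - 2) ^ e / (u * (pellLucas 1 - pellLucas (n + 1)) ^ (e + 1)) =
      (pellLucasRatio n ^ e + 2 * pellLucasRatio n ^ (e + 1) - pellLucasRatio n ^ (e + 2)) /
        ((pellLucas 1 - pellLucas (n + 1)) * (pellLucasRatio n ^ n - 1)) := by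
  have hs := (pellLucas_one_sub_succ_neg (by omega : 1 ≤ n)).ne
  have hT := pellLucasRatio_pow_sub_one_ne_zero (by omega : 1 ≤ n)
  have hu0 : u ≠ 0 := by rintro rfl; exact hT (by linarith)
  rw [← pellLucas_one_sub_succ_mul_pellLucasRatio (by omega : 1 ≤ n), mul_pow, pow_succ]
  field_simp
  linear_combination (-pellLucasRatio n ^ e) * hu

theorem circ_pellLucas_inverse (n : ℕ) (hn : 3 ≤ n)
    (u : ℚ) (hu : u = pellLucas 1 - 3 * pellLucas n +
      ∑ k ∈ Finset.Icc 2 (n - 1), (pellLucas (k + 1) - 3 * pellLucas k) *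
        ((pellLucas n - 2) / (pellLucas 1 - pellLucas (n + 1))) ^ (n - k))
    (q : ℕ → ℚ)
    (hq1 : q 1 = (1 / u) * (1 -
      8 * (pellLucas n - 2) ^ (n - 3) / (pellLucas 1 - pellLucas (n + 1)) ^ (n - 2) +
      ∑ k ∈ Finset.Icc 1 (n - 3), (pellLucas (n - k + 2) - 3 * pellLucas (n - k + 1)) *
        (pellLucas n - 2) ^ (k - 1) / (pellLucas 1 - pellLucas (n + 1)) ^ k))
    (hq2 : q 2 = (1 / u) * (-3 +
      ∑ k ∈ Finset.Icc 1 (n - 2), (pellLucas (n - k + 1) - 3 * pellLucas (n - k)) *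
        (pellLucas n - 2) ^ (k - 1) / (pellLucas 1 - pellLucas (n + 1)) ^ k))
    (hqm : ∀ m, 3 ≤ m → m ≤ n →
      q m = 4 * (pellLucas n - 2) ^ (m - 3) /
        (u * (pellLucas 1 - pellLucas (n + 1)) ^ (m - 2))) :
    (circMat n pellLucas)⁻¹ = circMat n q := by
  have hu' : u * (1 + 2 * pellLucasRatio n - pellLucasRatio n ^ 2) =
      4 * (pellLucasRatio n ^ n - 1) := by
    rw [hu]
    exact pellLucasU_mul (by omega)
  refine Matrix.inv_eq_right_inv (circMat_pellLucas_mul_eq_one (by omega) q ?_ ?_ fun e he => ?_)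
  · exact hq1.trans (pellLucasInv_one_eq hn hu')
  · exact hq2.trans (pellLucasInv_two_eq (by omega) hu')
  · exact (hqm (e + 3) (by omega) he).trans (pellLucasInv_eq he hu')
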